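/- arXiv:2302.10670 — 2 statements merged into one kernel-verified Lean document; each statement's English description precedes it below -/
import Mathlib

section
/- In the alternating group A₅ there exist elements σ, α, β with σ ≠ 1 such that σ = [β⁻¹σβ, α⁻¹σα], i.e., σ equals the commutator of its conjugates by β and α. -/
set_option maxRecDepth 10000
theorem exists_sigma_in_A5 :
    ∃ σ α β : alternatingGroup (Fin 5), σ ≠ 1 ∧
      σ = (β⁻¹ * σ * β)⁻¹ * (α⁻¹ * σ * α)⁻¹ * (β⁻¹ * σ * β) * (α⁻¹ * σ * α) := by
  refine ⟨⟨c[2, 3, 4], Equiv.Perm.mem_alternatingGroup.mpr (by decide)⟩,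
    ⟨c[0, 1, 2], Equiv.Perm.mem_alternatingGroup.mpr (by decide)⟩,
    ⟨c[0, 2, 3], Equiv.Perm.mem_alternatingGroup.mpr (by decide)⟩, ?_, ?_⟩
  · intro h
    exact absurd (congrArg Subtype.val h) (by decide)
  · apply Subtype.ext
    decide
end

section
/- If a state sequence q of a finitary G-automaton T of depth d does not act as the identity on Σ*, then there exists a word u of length at most d on which q acts non-trivially. Consequently, q =_T id if and only if q acts trivially on all words of length exactly d. -/
/-- A deterministic, complete, invertible letter-to-letter transducer (a G-automaton):
`δ p a` gives the output letter and the next state for state `p` and input letter `a`;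
invertibility says that, for each state, the input-output letter correspondence is a bijection. -/
structure GAutomaton (Q A : Type*) where
  δ : Q → A → A × Q
  inv : ∀ p : Q, Function.Bijective (fun a => (δ p a).1)

/-- The formal inverse of a state sequence: reverse and formally invert every state. -/
def wordInv {Q : Type*} (w : List (Q × Bool)) : List (Q × Bool) :=
  (w.map (fun x => (x.1, !x.2))).reverse

/-- One step of a signed state (a state or a formal inverse state) on a letter:
a positive state acts via `δ`; an inverse state inverts input and output. -/
noncomputable def GAutomaton.stepLetter {Q A : Type*} [Nonempty A] (T : GAutomaton Q A) :
    Q × Bool → A → A × (Q × Bool)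
  | (p, false), a => ((T.δ p a).1, ((T.δ p a).2, false))
  | (p, true), b =>
    let a := Function.invFun (fun x => (T.δ p x).1) b
    (a, ((T.δ p a).2, true))

/-- Running a single signed state on a word: returns the output word and the reached state. -/
noncomputable def GAutomaton.stepWord {Q A : Type*} [Nonempty A] (T : GAutomaton Q A) :
    Q × Bool → List A → List A × (Q × Bool)
  | s, [] => ([], s)
  | s, a :: u =>
    let r := T.stepLetter s a
    let r2 := T.stepWord r.2 u
    (r.1 :: r2.1, r2.2)

/-- The left action of a sequence of signed states on a word;
the rightmost state of the sequence acts first. -/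
noncomputable def GAutomaton.act {Q A : Type*} [Nonempty A] (T : GAutomaton Q A) :
    List (Q × Bool) → List A → List A
  | [], u => u
  | s :: qs, u => (T.stepWord s (T.act qs u)).1

/-- An identity state: it outputs its input unchanged and loops on itself. -/
def GAutomaton.IsIdentityState {Q A : Type*} (T : GAutomaton Q A) (e : Q) : Prop :=
  ∀ a : A, T.δ e a = (a, e)

/-- The state reached from `p` after reading the input word `u`. -/
def GAutomaton.runState {Q A : Type*} (T : GAutomaton Q A) : Q → List A → Q
  | p, [] => p
  | p, a :: u => T.runState (T.δ p a).2 u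

section Aux
variable {Q A : Type*} [Nonempty A] (T : GAutomaton Q A)

@[simp] lemma stepWord_nil (s : Q × Bool) : T.stepWord s [] = ([], s) := rfl

lemma stepWord_cons (s : Q × Bool) (a : A) (u : List A) :
    T.stepWord s (a :: u) =
      ((T.stepLetter s a).1 :: (T.stepWord (T.stepLetter s a).2 u).1,
       (T.stepWord (T.stepLetter s a).2 u).2) := rfl

lemma stepWord_length (s : Q × Bool) (u : List A) :
    (T.stepWord s u).1.length = u.length := by
  induction u generalizing s with
  | nil => rfl
  | cons a u ih => simp [stepWord_cons, ih]

lemma act_length (q : List (Q × Bool)) (u : List A) :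
    (T.act q u).length = u.length := by
  induction q generalizing u with
  | nil => rfl
  | cons s q ih => simp [GAutomaton.act, stepWord_length, ih]

lemma stepWord_append (s : Q × Bool) (u v : List A) :
    T.stepWord s (u ++ v) =
      ((T.stepWord s u).1 ++ (T.stepWord (T.stepWord s u).2 v).1,
       (T.stepWord (T.stepWord s u).2 v).2) := by
  induction u generalizing s with
  | nil => simp
  | cons a u ih => simp [stepWord_cons, ih]

/-- The reached state list after `q` acts on `u`. -/
noncomputable def actRun : List (Q × Bool) → List A → List (Q × Bool)
  | [], _ => []
  | s :: qs, u => (T.stepWord s (T.act qs u)).2 :: actRun qs u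

lemma act_append (q : List (Q × Bool)) (u v : List A) :
    T.act q (u ++ v) = T.act q u ++ T.act (actRun T q u) v := by
  induction q generalizing u v with
  | nil => rfl
  | cons s q ih => simp [GAutomaton.act, actRun, ih, stepWord_append]

lemma stepLetter_id {p : Q} (hp : T.IsIdentityState p) (b : Bool) (a : A) :
    T.stepLetter (p, b) a = (a, (p, b)) := by
  cases b with
  | false => simp [GAutomaton.stepLetter, hp a]
  | true =>
    have hf : (fun x => (T.δ p x).1) = id := by funext x; simp [hp x]
    have : Function.invFun (fun x => (T.δ p x).1) a = a := by
      rw [hf]; exact Function.leftInverse_invFun Function.injective_id a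
    simp [GAutomaton.stepLetter, this, hp a]

lemma stepWord_id {p : Q} (hp : T.IsIdentityState p) (b : Bool) (u : List A) :
    T.stepWord (p, b) u = (u, (p, b)) := by
  induction u with
  | nil => rfl
  | cons a u ih => simp [stepWord_cons, stepLetter_id T hp, ih]

lemma stepWord_snd (s : Q × Bool) (u : List A) :
    ∃ v : List A, v.length = u.length ∧ (T.stepWord s u).2 = (T.runState s.1 v, s.2) := by
  induction u generalizing s with
  | nil => exact ⟨[], rfl, by simp [GAutomaton.runState]⟩
  | cons a u ih =>
    obtain ⟨p, b⟩ := s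
    have hstep : ∃ a' : A, T.stepLetter (p, b) a = ((T.stepLetter (p, b) a).1, ((T.δ p a').2, b)) := by
      cases b with
      | false => exact ⟨a, rfl⟩
      | true => exact ⟨Function.invFun (fun x => (T.δ p x).1) a, rfl⟩
    obtain ⟨a', ha'⟩ := hstep
    obtain ⟨v, hv, hv2⟩ := ih ((T.δ p a').2, b)
    refine ⟨a' :: v, by simp [hv], ?_⟩
    rw [stepWord_cons, ha']
    simpa [GAutomaton.runState] using hv2

lemma actRun_id (q : List (Q × Bool)) (u : List A) (hu : u.length = d)
    (hdepth : ∀ (p : Q) (w : List A), w.length = d → T.IsIdentityState (T.runState p w)) :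
    ∀ s ∈ actRun T q u, T.IsIdentityState s.1 := by
  induction q with
  | nil => simp [actRun]
  | cons s q ih =>
    intro t ht
    simp only [actRun, List.mem_cons] at ht
    rcases ht with rfl | ht
    · obtain ⟨v, hv, hv2⟩ := stepWord_snd T s (T.act q u)
      rw [hv2]
      exact hdepth s.1 v (by rw [hv, act_length, hu])
    · exact ih t ht

lemma act_id (L : List (Q × Bool)) (hL : ∀ s ∈ L, T.IsIdentityState s.1) (v : List A) :
    T.act L v = v := by
  induction L with
  | nil => rfl
  | cons s L ih =>
    have hs := hL s (by simp)
    simp only [GAutomaton.act, ih (fun t ht => hL t (List.mem_cons_of_mem _ ht))]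
    obtain ⟨p, b⟩ := s
    rw [stepWord_id T hs]

end Aux
theorem finitary_word_problem_witness {Q A : Type*} [Nonempty A]
    (T : GAutomaton Q A) (d : ℕ)
    (hdepth : ∀ (p : Q) (u : List A), u.length = d → T.IsIdentityState (T.runState p u))
    (q : List (Q × Bool)) :
    ((¬ ∀ u : List A, T.act q u = u) → ∃ u : List A, u.length ≤ d ∧ T.act q u ≠ u) ∧
    ((∀ u : List A, T.act q u = u) ↔ ∀ u : List A, u.length = d → T.act q u = u) := by
  obtain ⟨a₀⟩ := ‹Nonempty A›
  have key : (∀ u : List A, u.length = d → T.act q u = u) → ∀ u : List A, T.act q u = u := by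
    intro h u
    by_cases hlen : u.length ≤ d
    · -- pad u to length d
      set w := u ++ List.replicate (d - u.length) a₀ with hw
      have hwlen : w.length = d := by simp [hw]; omega
      have hfix := h w hwlen
      rw [hw, act_append] at hfix
      have := List.append_inj hfix (by rw [act_length])
      exact this.1
    · -- split u at d
      have hsplit : u = u.take d ++ u.drop d := (List.take_append_drop d u).symm
      have htake : (u.take d).length = d := by simp; omega
      rw [hsplit, act_append, h _ htake,
        act_id T _ (actRun_id T q (u.take d) htake hdepth)]
  constructor
  · intro hne
    by_contra hno
    push_neg at hno
    exact hne (key (fun u hu => by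
      by_contra hc
      exact hc (hno u (le_of_eq hu))))
  · exact ⟨fun h u _ => h u, key⟩
end
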